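/- arXiv:2502.04006 — 2 statements merged into one kernel-verified Lean document; each statement's English description precedes it below -/
import Mathlib

section
/- For a nonzero closed cone K in ℝⁿ, the extreme rays of CP(K) are exactly the rays ℝ₊·aaᵀ with a ∈ K \ {0}, and every such extreme ray is an exposed face of CP(K). -/
open Matrix
open scoped Pointwise

noncomputable section

/-- Frobenius inner product on real `n × n` matrices:
`⟨A,B⟩ = ∑ᵢⱼ Aᵢⱼ Bᵢⱼ`. -/
def mip {n : ℕ} (A B : Matrix (Fin n) (Fin n) ℝ) : ℝ :=
  ∑ i, ∑ j, A i j * B i j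

/-- `CPset S` (also used for `S₊(X)` when `S` is a subspace): the set of matrices of the
form `∑ᵢ aᵢaᵢᵀ` for a positive number of vectors `aᵢ ∈ S`. -/
def CPset {n : ℕ} (S : Set (Fin n → ℝ)) : Set (Matrix (Fin n) (Fin n) ℝ) :=
  {A | ∃ k : ℕ, 0 < k ∧ ∃ f : Fin k → (Fin n → ℝ),
        (∀ i, f i ∈ S) ∧ A = ∑ i, Matrix.vecMulVec (f i) (f i)}

/-- `COPset K`: symmetric matrices `A` with `xᵀAx ≥ 0` for all `x ∈ K`. -/
def COPset {n : ℕ} (K : Set (Fin n → ℝ)) : Set (Matrix (Fin n) (Fin n) ℝ) :=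
  {A | A.IsSymm ∧ ∀ x ∈ K, 0 ≤ x ⬝ᵥ A.mulVec x}

/-- `F` is a face of the convex cone `C`: a nonempty convex subcone such that
`a, b ∈ C`, `a + b ∈ F` imply `a, b ∈ F`. -/
def IsFaceOf {M : Type*} [AddCommMonoid M] [Module ℝ M] (C F : Set M) : Prop :=
  F.Nonempty ∧ F ⊆ C ∧ Convex ℝ F ∧ (∀ x ∈ F, ∀ c : ℝ, 0 ≤ c → c • x ∈ F) ∧
    ∀ a ∈ C, ∀ b ∈ C, a + b ∈ F → a ∈ F ∧ b ∈ F

/-- Exposed face of a cone of matrices (w.r.t. the trace inner product). -/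
def IsExposedFaceOf {n : ℕ} (C F : Set (Matrix (Fin n) (Fin n) ℝ)) : Prop :=
  IsFaceOf C F ∧ ∃ H : Matrix (Fin n) (Fin n) ℝ,
    (∀ A ∈ C, 0 ≤ mip H A) ∧ F = {A ∈ C | mip H A = 0}

/-- Dimension of a set: dimension of its linear span. -/
def setDim {M : Type*} [AddCommGroup M] [Module ℝ M] (S : Set M) : ℕ :=
  Module.finrank ℝ (Submodule.span ℝ S)

/-- The ray `ℝ₊ • x`. -/
def rayOf {M : Type*} [AddCommMonoid M] [Module ℝ M] (x : M) : Set M :=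
  {y | ∃ c : ℝ, 0 ≤ c ∧ y = c • x}

/-- An extreme ray: a one-dimensional face. -/
def IsExtremeRayOf {M : Type*} [AddCommGroup M] [Module ℝ M] (C F : Set M) : Prop :=
  IsFaceOf C F ∧ setDim F = 1

/-- The second-order cone `L^{m+1} = {x : x₀ ≥ ‖(x₁,…,xₘ)‖}`. -/
def soc (m : ℕ) : Set (Fin (m+1) → ℝ) :=
  {x | Real.sqrt (∑ i : Fin m, x i.succ ^ 2) ≤ x 0}

/-- The boundary `∂L^{m+1} = {x : x₀ = ‖(x₁,…,xₘ)‖}`. -/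
def socBd (m : ℕ) : Set (Fin (m+1) → ℝ) :=
  {x | Real.sqrt (∑ i : Fin m, x i.succ ^ 2) = x 0}

/-- The interior `int L^{m+1} = {x : x₀ > ‖(x₁,…,xₘ)‖}`. -/
def socInt (m : ℕ) : Set (Fin (m+1) → ℝ) :=
  {x | Real.sqrt (∑ i : Fin m, x i.succ ^ 2) < x 0}

/-- The matrix `J = diag(1, −1, …, −1)`. -/
def Jmat (m : ℕ) : Matrix (Fin (m+1)) (Fin (m+1)) ℝ :=
  Matrix.diagonal fun i => if i = 0 then 1 else -1

/-- The hyperplane `{x : x ⬝ u = 0}` as a submodule. -/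
def perpHyp {n : ℕ} (u : Fin n → ℝ) : Submodule ℝ (Fin n → ℝ) where
  carrier := {x | x ⬝ᵥ u = 0}
  add_mem' := by
    intro a b ha hb
    simp only [Set.mem_setOf_eq, add_dotProduct] at *
    linarith
  zero_mem' := by simp [zero_dotProduct]
  smul_mem' := by
    intro c a ha
    simp only [Set.mem_setOf_eq, smul_dotProduct] at *
    simp [ha]

/-- A polyhedral cone: nonnegative combinations of finitely many vectors. -/
def IsPolyhedralCone {M : Type*} [AddCommMonoid M] [Module ℝ M] (S : Set M) : Prop :=
  ∃ (k : ℕ) (g : Fin k → M),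
    S = {x | ∃ c : Fin k → ℝ, (∀ i, 0 ≤ c i) ∧ x = ∑ i, c i • g i}

end


/-! For `a ≠ 0` the matrix `H = ‖a‖² I - aaᵀ` satisfies `⟨H, bbᵀ⟩ = ‖a‖²‖b‖² - (a·b)² ≥ 0`,
with equality exactly when `b` is a multiple of `a` (Cauchy–Schwarz). So `H` is nonnegative on
`CP(K)` and vanishes on it precisely along the ray `ℝ₊aaᵀ`, which is therefore an exposed face,
and it is one-dimensional. Conversely, a nonzero element `∑ bⱼbⱼᵀ` of an extreme ray `F` splits
off a summand `bbᵀ ≠ 0`, which the face must contain; since `F` is one-dimensional and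
matrices in `CP(K)` have nonnegative diagonal, `F = ℝ₊bbᵀ`. -/

section Rays

variable {M : Type*} [AddCommGroup M] [Module ℝ M]

lemma mem_rayOf_self (x : M) : x ∈ rayOf x :=
  ⟨1, zero_le_one, (one_smul ℝ x).symm⟩

lemma smul_mem_rayOf {x y : M} (hy : y ∈ rayOf x) {c : ℝ} (hc : 0 ≤ c) : c • y ∈ rayOf x := by
  obtain ⟨d, hd, rfl⟩ := hy
  exact ⟨c * d, mul_nonneg hc hd, smul_smul c d x⟩

lemma convex_rayOf (x : M) : Convex ℝ (rayOf x) := by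
  rintro _ ⟨c, hc, rfl⟩ _ ⟨d, hd, rfl⟩ s t hs ht -
  exact ⟨s * c + t * d, by positivity, by rw [smul_smul, smul_smul, add_smul]⟩

lemma span_rayOf (x : M) : Submodule.span ℝ (rayOf x) = Submodule.span ℝ {x} := by
  refine le_antisymm (Submodule.span_le.mpr ?_) (Submodule.span_mono ?_)
  · rintro _ ⟨c, -, rfl⟩
    exact Submodule.smul_mem _ c (Submodule.mem_span_singleton_self x)
  · simpa using mem_rayOf_self x

lemma setDim_rayOf {x : M} (hx : x ≠ 0) : setDim (rayOf x) = 1 := by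
  rw [setDim, span_rayOf, finrank_span_singleton hx]

lemma exists_ne_zero_of_setDim_eq_one {F : Set M} (hF : setDim F = 1) : ∃ x ∈ F, x ≠ 0 := by
  by_contra! h
  rw [setDim, (Submodule.span_eq_bot).mpr h, finrank_bot] at hF
  exact zero_ne_one hF

lemma IsFaceOf.eq_rayOf {C F : Set M} (hF : IsFaceOf C F) (hdim : setDim F = 1) {v : M}
    (hv : v ∈ F) (hv0 : v ≠ 0) (hpointed : ∀ c : ℝ, c • v ∈ C → 0 ≤ c) : F = rayOf v := by
  obtain ⟨-, hFC, -, hscale, -⟩ := hF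
  have hline := (finrank_eq_one_iff_of_nonzero' (⟨v, Submodule.subset_span hv⟩ :
    Submodule.span ℝ F) (by simpa using hv0)).mp hdim
  refine Set.Subset.antisymm (fun x hx => ?_) (fun _ ⟨c, hc, hx⟩ => hx ▸ hscale v hv c hc)
  obtain ⟨c, hc⟩ := hline ⟨x, Submodule.subset_span hx⟩
  have hcx : c • v = x := congrArg Subtype.val hc
  exact ⟨c, hpointed c (hcx ▸ hFC hx), hcx.symm⟩

end Rays

section CauchySchwarz

variable {ι : Type*} [Fintype ι]

lemma dotProduct_self_pos {a : ι → ℝ} (ha : a ≠ 0) : 0 < a ⬝ᵥ a := by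
  simpa using dotProduct_self_star_pos_iff.mpr ha

/-- Lagrange's identity: it yields Cauchy–Schwarz together with its equality case. -/
lemma dotProduct_self_smul_sub_smul (a b : ι → ℝ) :
    ((a ⬝ᵥ a) • b - (a ⬝ᵥ b) • a) ⬝ᵥ ((a ⬝ᵥ a) • b - (a ⬝ᵥ b) • a) =
      (a ⬝ᵥ a) * ((a ⬝ᵥ a) * (b ⬝ᵥ b) - (a ⬝ᵥ b) ^ 2) := by
  simp only [sub_dotProduct, dotProduct_sub, smul_dotProduct, dotProduct_smul, smul_eq_mul,
    dotProduct_comm b a]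
  ring

lemma sq_dotProduct_le (a b : ι → ℝ) : (a ⬝ᵥ b) ^ 2 ≤ (a ⬝ᵥ a) * (b ⬝ᵥ b) := by
  rcases eq_or_ne a 0 with rfl | ha
  · simp
  have hnonneg : 0 ≤ (a ⬝ᵥ a) * ((a ⬝ᵥ a) * (b ⬝ᵥ b) - (a ⬝ᵥ b) ^ 2) := by
    rw [← dotProduct_self_smul_sub_smul]
    simpa using dotProduct_self_star_nonneg ((a ⬝ᵥ a) • b - (a ⬝ᵥ b) • a)
  exact sub_nonneg.mp (nonneg_of_mul_nonneg_right hnonneg (dotProduct_self_pos ha))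

lemma exists_eq_smul_of_sq_dotProduct_eq {a b : ι → ℝ} (ha : a ≠ 0)
    (h : (a ⬝ᵥ b) ^ 2 = (a ⬝ᵥ a) * (b ⬝ᵥ b)) : ∃ t : ℝ, b = t • a := by
  have hpos := dotProduct_self_pos ha
  have hzero : (a ⬝ᵥ a) • b - (a ⬝ᵥ b) • a = 0 := by
    rw [← dotProduct_self_eq_zero, dotProduct_self_smul_sub_smul, h, sub_self, mul_zero]
  refine ⟨(a ⬝ᵥ b) / (a ⬝ᵥ a), ?_⟩
  rw [div_eq_inv_mul, mul_smul, ← sub_eq_zero.mp hzero, smul_smul, inv_mul_cancel₀ hpos.ne',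
    one_smul]

end CauchySchwarz

section FrobeniusPairing

variable {n : ℕ}

lemma mip_add_right (H A B : Matrix (Fin n) (Fin n) ℝ) :
    mip H (A + B) = mip H A + mip H B := by
  simp only [mip, Matrix.add_apply, mul_add, Finset.sum_add_distrib]

lemma mip_smul_right (H A : Matrix (Fin n) (Fin n) ℝ) (c : ℝ) :
    mip H (c • A) = c * mip H A := by
  simp only [mip, Matrix.smul_apply, smul_eq_mul, Finset.mul_sum, mul_left_comm]

lemma mip_sum_right {ι : Type*} (H : Matrix (Fin n) (Fin n) ℝ) (s : Finset ι)
    (A : ι → Matrix (Fin n) (Fin n) ℝ) : mip H (∑ k ∈ s, A k) = ∑ k ∈ s, mip H (A k) := by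
  simp only [mip, Matrix.sum_apply, Finset.mul_sum]
  rw [Finset.sum_comm (s := s)]
  exact Finset.sum_congr rfl fun i _ => Finset.sum_comm

def exposingMatrix (a : Fin n → ℝ) : Matrix (Fin n) (Fin n) ℝ :=
  (a ⬝ᵥ a) • (1 : Matrix (Fin n) (Fin n) ℝ) - Matrix.vecMulVec a a

lemma mip_exposingMatrix_vecMulVec (a b : Fin n → ℝ) :
    mip (exposingMatrix a) (Matrix.vecMulVec b b) = (a ⬝ᵥ a) * (b ⬝ᵥ b) - (a ⬝ᵥ b) ^ 2 := by
  simp only [mip, exposingMatrix, Matrix.sub_apply, Matrix.smul_apply, Matrix.one_apply,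
    Matrix.vecMulVec_apply, sub_mul, Finset.sum_sub_distrib, sq, dotProduct, Finset.sum_mul_sum]
  simp only [smul_eq_mul, mul_comm, Finset.mul_sum, mul_ite, mul_one, mul_zero,
    Finset.sum_ite_irrel, Finset.sum_const_zero, mul_left_comm, Finset.sum_ite_eq,
    Finset.mem_univ, ↓reduceIte, sub_left_inj]
  exact Finset.sum_comm

lemma mip_exposingMatrix_vecMulVec_nonneg (a b : Fin n → ℝ) :
    0 ≤ mip (exposingMatrix a) (Matrix.vecMulVec b b) := by
  rw [mip_exposingMatrix_vecMulVec]
  exact sub_nonneg.mpr (sq_dotProduct_le a b)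

end FrobeniusPairing

section CompletelyPositive

variable {n : ℕ} {S : Set (Fin n → ℝ)}

lemma vecMulVec_self_mem_CPset {a : Fin n → ℝ} (ha : a ∈ S) : Matrix.vecMulVec a a ∈ CPset S :=
  ⟨1, one_pos, fun _ => a, fun _ => ha, by simp⟩

lemma rayOf_vecMulVec_subset_CPset (hS : ∀ x ∈ S, ∀ c : ℝ, 0 ≤ c → c • x ∈ S)
    {a : Fin n → ℝ} (ha : a ∈ S) : rayOf (Matrix.vecMulVec a a) ⊆ CPset S := by
  rintro _ ⟨c, hc, rfl⟩
  have h := vecMulVec_self_mem_CPset (hS a ha √c (Real.sqrt_nonneg c))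
  rwa [smul_vecMulVec, vecMulVec_smul, smul_smul, Real.mul_self_sqrt hc] at h

lemma diag_nonneg_of_mem_CPset {A : Matrix (Fin n) (Fin n) ℝ} (hA : A ∈ CPset S) (i : Fin n) :
    0 ≤ A i i := by
  obtain ⟨k, -, f, -, rfl⟩ := hA
  simpa [Matrix.sum_apply, Matrix.vecMulVec_apply] using
    Finset.sum_nonneg fun j (_ : j ∈ Finset.univ) => mul_self_nonneg (f j i)

lemma nonneg_of_smul_vecMulVec_mem_CPset {b : Fin n → ℝ} (hb : b ≠ 0) {c : ℝ}
    (h : c • Matrix.vecMulVec b b ∈ CPset S) : 0 ≤ c := by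
  obtain ⟨i, hi⟩ := Function.ne_iff.mp hb
  have hdiag := diag_nonneg_of_mem_CPset h i
  simp only [Matrix.smul_apply, Matrix.vecMulVec_apply, smul_eq_mul] at hdiag
  exact nonneg_of_mul_nonneg_left hdiag (mul_self_pos.mpr hi)

lemma sum_vecMulVec_eq_add_sum_update {k : ℕ} (f : Fin k → Fin n → ℝ) (i : Fin k) :
    ∑ j, Matrix.vecMulVec (f j) (f j) = Matrix.vecMulVec (f i) (f i) +
      ∑ j, Matrix.vecMulVec (Function.update f i 0 j) (Function.update f i 0 j) := by
  rw [← Finset.add_sum_erase _ _ (Finset.mem_univ i),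
    ← Finset.add_sum_erase _ (fun j => Matrix.vecMulVec (Function.update f i 0 j) _)
      (Finset.mem_univ i)]
  simp only [Function.update_self, Matrix.zero_vecMulVec, zero_add]
  congr 1
  exact Finset.sum_congr rfl fun j hj => by rw [Function.update_of_ne (Finset.ne_of_mem_erase hj)]

lemma exists_vecMulVec_mem_of_isFaceOf (h0 : (0 : Fin n → ℝ) ∈ S)
    {F : Set (Matrix (Fin n) (Fin n) ℝ)} (hF : IsFaceOf (CPset S) F)
    {A : Matrix (Fin n) (Fin n) ℝ} (hA : A ∈ F) (hA0 : A ≠ 0) :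
    ∃ b ∈ S, b ≠ 0 ∧ Matrix.vecMulVec b b ∈ F := by
  obtain ⟨-, hFC, -, -, hextreme⟩ := hF
  obtain ⟨k, hk, f, hf, rfl⟩ := hFC hA
  obtain ⟨i, hi⟩ : ∃ i, f i ≠ 0 := by
    by_contra! h
    exact hA0 (Finset.sum_eq_zero fun j _ => by rw [h j, Matrix.zero_vecMulVec])
  have hrest : ∑ j, Matrix.vecMulVec (Function.update f i 0 j) (Function.update f i 0 j) ∈
      CPset S := by
    refine ⟨k, hk, Function.update f i 0, fun j => ?_, rfl⟩
    rcases eq_or_ne j i with rfl | hj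
    · simpa using h0
    · simpa [Function.update_of_ne hj] using hf j
  rw [sum_vecMulVec_eq_add_sum_update f i] at hA
  exact ⟨f i, hf i, hi, (hextreme _ (vecMulVec_self_mem_CPset (hf i)) _ hrest hA).1⟩

lemma mip_exposingMatrix_nonneg (a : Fin n → ℝ) {A : Matrix (Fin n) (Fin n) ℝ}
    (hA : A ∈ CPset S) : 0 ≤ mip (exposingMatrix a) A := by
  obtain ⟨k, -, f, -, rfl⟩ := hA
  rw [mip_sum_right]
  exact Finset.sum_nonneg fun j _ => mip_exposingMatrix_vecMulVec_nonneg a (f j)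

lemma mem_rayOf_of_mip_exposingMatrix_eq_zero {a : Fin n → ℝ} (ha : a ≠ 0)
    {A : Matrix (Fin n) (Fin n) ℝ} (hA : A ∈ CPset S) (h : mip (exposingMatrix a) A = 0) :
    A ∈ rayOf (Matrix.vecMulVec a a) := by
  obtain ⟨k, -, f, -, rfl⟩ := hA
  rw [mip_sum_right, Finset.sum_eq_zero_iff_of_nonneg fun j _ =>
    mip_exposingMatrix_vecMulVec_nonneg a (f j)] at h
  have hparallel : ∀ j, ∃ t : ℝ, f j = t • a := fun j =>
    exists_eq_smul_of_sq_dotProduct_eq ha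
      (sub_eq_zero.mp (mip_exposingMatrix_vecMulVec a (f j) ▸ h j (Finset.mem_univ j))).symm
  choose t ht using hparallel
  refine ⟨∑ j, t j * t j, Finset.sum_nonneg fun j _ => mul_self_nonneg (t j), ?_⟩
  simp only [ht, smul_vecMulVec, vecMulVec_smul, smul_smul, Finset.sum_smul]

lemma rayOf_vecMulVec_eq (hS : ∀ x ∈ S, ∀ c : ℝ, 0 ≤ c → c • x ∈ S) {a : Fin n → ℝ}
    (ha : a ∈ S) (ha0 : a ≠ 0) :
    rayOf (Matrix.vecMulVec a a) = {A ∈ CPset S | mip (exposingMatrix a) A = 0} := by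
  refine Set.Subset.antisymm (fun A hA => ⟨rayOf_vecMulVec_subset_CPset hS ha hA, ?_⟩)
    (fun A ⟨hAC, hA⟩ => mem_rayOf_of_mip_exposingMatrix_eq_zero ha0 hAC hA)
  obtain ⟨c, -, rfl⟩ := hA
  rw [mip_smul_right, mip_exposingMatrix_vecMulVec, sq, sub_self, mul_zero]

lemma isFaceOf_rayOf_vecMulVec (hS : ∀ x ∈ S, ∀ c : ℝ, 0 ≤ c → c • x ∈ S) {a : Fin n → ℝ}
    (ha : a ∈ S) (ha0 : a ≠ 0) : IsFaceOf (CPset S) (rayOf (Matrix.vecMulVec a a)) := by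
  refine ⟨⟨_, mem_rayOf_self _⟩, rayOf_vecMulVec_subset_CPset hS ha, convex_rayOf _,
    fun _ hx _ hc => smul_mem_rayOf hx hc, fun A hA B hB hAB => ?_⟩
  rw [rayOf_vecMulVec_eq hS ha ha0] at hAB ⊢
  have hsum : mip (exposingMatrix a) A + mip (exposingMatrix a) B = 0 := by
    rw [← mip_add_right, hAB.2]
  have hA0 := mip_exposingMatrix_nonneg a hA
  have hB0 := mip_exposingMatrix_nonneg a hB
  exact ⟨⟨hA, by linarith⟩, ⟨hB, by linarith⟩⟩

lemma isExposedFaceOf_rayOf_vecMulVec (hS : ∀ x ∈ S, ∀ c : ℝ, 0 ≤ c → c • x ∈ S)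
    {a : Fin n → ℝ} (ha : a ∈ S) (ha0 : a ≠ 0) :
    IsExposedFaceOf (CPset S) (rayOf (Matrix.vecMulVec a a)) :=
  ⟨isFaceOf_rayOf_vecMulVec hS ha ha0, exposingMatrix a,
    fun _ hA => mip_exposingMatrix_nonneg a hA, rayOf_vecMulVec_eq hS ha ha0⟩

lemma isExtremeRayOf_rayOf_vecMulVec (hS : ∀ x ∈ S, ∀ c : ℝ, 0 ≤ c → c • x ∈ S)
    {a : Fin n → ℝ} (ha : a ∈ S) (ha0 : a ≠ 0) :
    IsExtremeRayOf (CPset S) (rayOf (Matrix.vecMulVec a a)) :=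
  ⟨isFaceOf_rayOf_vecMulVec hS ha ha0, setDim_rayOf (Matrix.vecMulVec_ne_zero ha0 ha0)⟩

lemma IsExtremeRayOf.exists_eq_rayOf_vecMulVec (h0 : (0 : Fin n → ℝ) ∈ S)
    {F : Set (Matrix (Fin n) (Fin n) ℝ)} (hF : IsExtremeRayOf (CPset S) F) :
    ∃ b ∈ S, b ≠ 0 ∧ F = rayOf (Matrix.vecMulVec b b) := by
  obtain ⟨A, hA, hA0⟩ := exists_ne_zero_of_setDim_eq_one hF.2
  obtain ⟨b, hb, hb0, hbF⟩ := exists_vecMulVec_mem_of_isFaceOf h0 hF.1 hA hA0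
  exact ⟨b, hb, hb0, hF.1.eq_rayOf hF.2 hbF (Matrix.vecMulVec_ne_zero hb0 hb0)
    fun _ hc => nonneg_of_smul_vecMulVec_mem_CPset hb0 hc⟩

end CompletelyPositive

theorem stmt2_general (n : ℕ) (K : Set (Fin n → ℝ))
    (hKcone : ∀ x ∈ K, ∀ c : ℝ, 0 ≤ c → c • x ∈ K)
    (hKne : ∃ x ∈ K, x ≠ 0) :
    (∀ F : Set (Matrix (Fin n) (Fin n) ℝ),
        IsExtremeRayOf (CPset K) F ↔
          ∃ a ∈ K, a ≠ 0 ∧ F = rayOf (Matrix.vecMulVec a a)) ∧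
    (∀ F : Set (Matrix (Fin n) (Fin n) ℝ),
        IsExtremeRayOf (CPset K) F → IsExposedFaceOf (CPset K) F) := by
  have h0 : (0 : Fin n → ℝ) ∈ K := by
    obtain ⟨x, hx, -⟩ := hKne
    simpa using hKcone x hx 0 le_rfl
  refine ⟨fun F => ⟨IsExtremeRayOf.exists_eq_rayOf_vecMulVec h0, ?_⟩, fun F hF => ?_⟩
  · rintro ⟨a, ha, ha0, rfl⟩
    exact isExtremeRayOf_rayOf_vecMulVec hKcone ha ha0
  · obtain ⟨a, ha, ha0, rfl⟩ := hF.exists_eq_rayOf_vecMulVec h0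
    exact isExposedFaceOf_rayOf_vecMulVec hKcone ha ha0

/-- for a nonzero closed cone `K`, the extreme rays of `CP(K)` are
exactly the rays `ℝ₊ aaᵀ` with `a ∈ K \ {0}`, and each extreme ray is exposed. -/
theorem stmt2 (n : ℕ) (K : Set (Fin n → ℝ)) (hKcl : IsClosed K)
    (hKcone : ∀ x ∈ K, ∀ c : ℝ, 0 ≤ c → c • x ∈ K)
    (hKne : ∃ x ∈ K, x ≠ 0) :
    (∀ F : Set (Matrix (Fin n) (Fin n) ℝ),
        IsExtremeRayOf (CPset K) F ↔
          ∃ a ∈ K, a ≠ 0 ∧ F = rayOf (Matrix.vecMulVec a a)) ∧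
    (∀ F : Set (Matrix (Fin n) (Fin n) ℝ),
        IsExtremeRayOf (CPset K) F → IsExposedFaceOf (CPset K) F) :=
  stmt2_general n K hKcone hKne
end

section
/- Let n ≥ 2 and let X be a linear subspace of ℝⁿ. Then S₊(X) ∩ {A ∈ Sⁿ : ⟨A, Jₙ⟩ ≥ 0} = CP(X ∩ Lⁿ), and S₊(X) ∩ {A ∈ Sⁿ : ⟨A, Jₙ⟩ = 0} = CP(X ∩ ∂Lⁿ). -/
open Matrix
open scoped Pointwise

/-! Write `A = ∑ aᵢaᵢᵀ` with `aᵢ ∈ X` and `q(a) = aᵀMa`, so that `⟨A, M⟩ = ∑ q(aᵢ)`. While some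
`q(aᵢ) < 0`, the sign of `⟨A, M⟩` provides some `q(aⱼ) > 0`; replace the pair by
`(cos θ aᵢ + sin θ aⱼ, -sin θ aᵢ + cos θ aⱼ)`, which stays in `X` and leaves `aᵢaᵢᵀ + aⱼaⱼᵀ`
unchanged, with `θ ∈ [0, π/2]` chosen by the intermediate value theorem so that the first vector
is `q`-isotropic. This lowers the number of non-isotropic vectors, so eventually every
`q(aᵢ) ≥ 0`. For `M = Jₙ`, replacing `aᵢ` by `-aᵢ` where needed puts every `aᵢ` in `Lⁿ`, and when
`⟨A, Jₙ⟩ = 0` the nonnegative `q(aᵢ)` sum to zero, so every `aᵢ` lies in `∂Lⁿ`. -/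

section

open Real

variable {n : ℕ}

lemma mip_add_left (A B M : Matrix (Fin n) (Fin n) ℝ) : mip (A + B) M = mip A M + mip B M := by
  simp only [mip, Matrix.add_apply, add_mul, Finset.sum_add_distrib]

lemma mip_multiset_sum_left {ι : Type*} (s : Multiset ι) (F : ι → Matrix (Fin n) (Fin n) ℝ)
    (M : Matrix (Fin n) (Fin n) ℝ) :
    mip (s.map F).sum M = (s.map fun x => mip (F x) M).sum := by
  induction s using Multiset.induction_on with
  | empty => simp [mip]
  | cons a s ih => simp [mip_add_left, ih]

lemma mip_vecMulVec_self (a : Fin n → ℝ) (M : Matrix (Fin n) (Fin n) ℝ) :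
    mip (vecMulVec a a) M = a ⬝ᵥ M *ᵥ a := by
  simp only [mip, vecMulVec_apply, dotProduct, mulVec, Finset.mul_sum]
  exact Finset.sum_congr rfl fun i _ => Finset.sum_congr rfl fun j _ => by ring

lemma mip_multiset_sum_vecMulVec_self (s : Multiset (Fin n → ℝ)) (M : Matrix (Fin n) (Fin n) ℝ) :
    mip (s.map fun a => vecMulVec a a).sum M = (s.map fun a => a ⬝ᵥ M *ᵥ a).sum := by
  simp only [mip_multiset_sum_left, mip_vecMulVec_self]

lemma mem_CPset_iff_multiset {S : Set (Fin n → ℝ)} {A : Matrix (Fin n) (Fin n) ℝ} :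
    A ∈ CPset S ↔ ∃ s : Multiset (Fin n → ℝ), s ≠ 0 ∧ (∀ a ∈ s, a ∈ S) ∧
      A = (s.map fun a => vecMulVec a a).sum := by
  constructor
  · rintro ⟨k, hk, f, hfS, rfl⟩
    refine ⟨Finset.univ.val.map f, ?_, by simpa using hfS, ?_⟩
    · simpa using hk.ne'
    · rw [Multiset.map_map, Finset.sum_eq_multiset_sum]
      rfl
  · rintro ⟨s, hs, hsS, rfl⟩
    refine ⟨s.toList.length, by simpa using Multiset.card_pos.mpr hs, fun i => s.toList[(i : ℕ)],
      fun i => hsS _ (Multiset.mem_toList.mp (List.getElem_mem _)), ?_⟩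
    beta_reduce
    rw [Fin.sum_univ_fun_getElem s.toList (fun a => vecMulVec a a), ← Multiset.sum_coe,
      ← Multiset.map_coe, Multiset.coe_toList]

lemma vecMulVec_rotate_add (a b : Fin n → ℝ) (θ : ℝ) :
    vecMulVec (cos θ • a + sin θ • b) (cos θ • a + sin θ • b) +
        vecMulVec (-sin θ • a + cos θ • b) (-sin θ • a + cos θ • b) =
      vecMulVec a a + vecMulVec b b := by
  ext i j
  simp only [vecMulVec_apply, Matrix.add_apply, Pi.add_apply, Pi.smul_apply, smul_eq_mul]
  linear_combination (a i * a j + b i * b j) * sin_sq_add_cos_sq θ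

lemma exists_rotate_dotProduct_mulVec_eq_zero (M : Matrix (Fin n) (Fin n) ℝ) {a b : Fin n → ℝ}
    (ha : a ⬝ᵥ M *ᵥ a ≤ 0) (hb : 0 ≤ b ⬝ᵥ M *ᵥ b) :
    ∃ θ : ℝ, (cos θ • a + sin θ • b) ⬝ᵥ M *ᵥ (cos θ • a + sin θ • b) = 0 := by
  set g : ℝ → ℝ := fun θ => (cos θ • a + sin θ • b) ⬝ᵥ M *ᵥ (cos θ • a + sin θ • b)
  have hg : Continuous g := by fun_prop
  have hzero : (0 : ℝ) ∈ Set.Icc (g 0) (g (π / 2)) := by simpa [g] using ⟨ha, hb⟩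
  obtain ⟨θ, -, hθ⟩ := intermediate_value_Icc (by positivity) hg.continuousOn hzero
  exact ⟨θ, hθ⟩

end

section

variable {n : ℕ} (M : Matrix (Fin n) (Fin n) ℝ) (X : Submodule ℝ (Fin n → ℝ))

lemma exists_isotropic_pair_of_nonpos_of_nonneg {a b : Fin n → ℝ} (haX : a ∈ X) (hbX : b ∈ X)
    (ha : a ⬝ᵥ M *ᵥ a ≤ 0) (hb : 0 ≤ b ⬝ᵥ M *ᵥ b) :
    ∃ c ∈ X, ∃ d ∈ X, c ⬝ᵥ M *ᵥ c = 0 ∧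
      vecMulVec c c + vecMulVec d d = vecMulVec a a + vecMulVec b b := by
  obtain ⟨θ, hθ⟩ := exists_rotate_dotProduct_mulVec_eq_zero M ha hb
  exact ⟨_, X.add_mem (X.smul_mem _ haX) (X.smul_mem _ hbX),
    _, X.add_mem (X.smul_mem _ haX) (X.smul_mem _ hbX), hθ, vecMulVec_rotate_add a b θ⟩

theorem exists_multiset_dotProduct_mulVec_nonneg (s : Multiset (Fin n → ℝ))
    (hsX : ∀ a ∈ s, a ∈ X) (hs : 0 ≤ (s.map fun a => a ⬝ᵥ M *ᵥ a).sum) :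
    ∃ t : Multiset (Fin n → ℝ), Multiset.card t = Multiset.card s ∧
      (∀ a ∈ t, a ∈ X ∧ 0 ≤ a ⬝ᵥ M *ᵥ a) ∧
      (t.map fun a => vecMulVec a a).sum = (s.map fun a => vecMulVec a a).sum := by
  induction hN : s.countP (fun a => a ⬝ᵥ M *ᵥ a ≠ 0) using Nat.strong_induction_on
    generalizing s with
  | _ N ih =>
  by_cases hneg : ∃ a ∈ s, a ⬝ᵥ M *ᵥ a < 0
  swap
  · push Not at hneg
    exact ⟨s, rfl, fun a ha => ⟨hsX a ha, hneg a ha⟩, rfl⟩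
  obtain ⟨a, has, hqa⟩ := hneg
  obtain ⟨r, rfl⟩ := Multiset.exists_cons_of_mem has
  obtain ⟨b, hbr, hqb⟩ : ∃ b ∈ r, 0 < b ⬝ᵥ M *ᵥ b := by
    by_contra! h
    have := Multiset.sum_map_le_sum_map _ (fun _ => (0 : ℝ)) h
    simp only [Multiset.map_cons, Multiset.sum_cons, Multiset.map_const', Multiset.sum_replicate,
      smul_zero] at hs this
    linarith
  obtain ⟨r, rfl⟩ := Multiset.exists_cons_of_mem hbr
  obtain ⟨c, hcX, d, hdX, hqc, hcd⟩ :=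
    exists_isotropic_pair_of_nonpos_of_nonneg M X (hsX a (by simp)) (hsX b (by simp))
      hqa.le hqb.le
  have hgram : ((c ::ₘ d ::ₘ r).map fun a => vecMulVec a a).sum =
      ((a ::ₘ b ::ₘ r).map fun a => vecMulVec a a).sum := by
    simp only [Multiset.map_cons, Multiset.sum_cons, ← add_assoc, hcd]
  have hcount : (c ::ₘ d ::ₘ r).countP (fun a => a ⬝ᵥ M *ᵥ a ≠ 0) < N := by
    rw [← hN]
    simp only [Multiset.countP_cons, hqc, hqa.ne, hqb.ne', ne_eq, not_true, not_false_eq_true,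
      if_true, if_false]
    split_ifs <;> omega
  have hsum : 0 ≤ ((c ::ₘ d ::ₘ r).map fun a => a ⬝ᵥ M *ᵥ a).sum := by
    rwa [← mip_multiset_sum_vecMulVec_self, hgram, mip_multiset_sum_vecMulVec_self]
  have hX : ∀ x ∈ c ::ₘ d ::ₘ r, x ∈ X := by
    simp only [Multiset.mem_cons, forall_eq_or_imp]
    exact ⟨hcX, hdX, fun x hx => hsX x (by simp [hx])⟩
  obtain ⟨t, hcard, htX, htgram⟩ := ih _ hcount _ hX hsum rfl
  exact ⟨t, by simpa using hcard, htX, htgram.trans hgram⟩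

theorem CPset_inter_mip_nonneg :
    CPset (X : Set (Fin n → ℝ)) ∩ {A | 0 ≤ mip A M} =
      CPset ((X : Set (Fin n → ℝ)) ∩ {a | 0 ≤ a ⬝ᵥ M *ᵥ a}) := by
  ext A
  simp only [Set.mem_inter_iff, Set.mem_ofPred_eq, mem_CPset_iff_multiset, SetLike.mem_coe]
  constructor
  · rintro ⟨⟨s, hs0, hsX, rfl⟩, hA⟩
    rw [mip_multiset_sum_vecMulVec_self] at hA
    obtain ⟨t, hcard, htX, hts⟩ := exists_multiset_dotProduct_mulVec_nonneg M X s hsX hA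
    refine ⟨t, fun ht0 => hs0 ?_, htX, hts.symm⟩
    rwa [ht0, Multiset.card_zero, eq_comm, Multiset.card_eq_zero] at hcard
  · rintro ⟨s, hs0, hs, rfl⟩
    refine ⟨⟨s, hs0, fun a ha => (hs a ha).1, rfl⟩, ?_⟩
    rw [mip_multiset_sum_vecMulVec_self]
    exact Multiset.sum_nonneg fun x hx => by
      obtain ⟨a, ha, rfl⟩ := Multiset.mem_map.mp hx
      exact (hs a ha).2

theorem CPset_inter_mip_eq_zero :
    CPset (X : Set (Fin n → ℝ)) ∩ {A | mip A M = 0} =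
      CPset ((X : Set (Fin n → ℝ)) ∩ {a | a ⬝ᵥ M *ᵥ a = 0}) := by
  ext A
  constructor
  · rintro ⟨hA, hA0⟩
    have hA' : A ∈ CPset ((X : Set (Fin n → ℝ)) ∩ {a | 0 ≤ a ⬝ᵥ M *ᵥ a}) := by
      rw [← CPset_inter_mip_nonneg]
      exact ⟨hA, hA0.ge⟩
    obtain ⟨t, ht0, ht, rfl⟩ := mem_CPset_iff_multiset.mp hA'
    rw [Set.mem_ofPred_eq, mip_multiset_sum_vecMulVec_self] at hA0
    have hnonneg : ∀ x ∈ t.map fun a => a ⬝ᵥ M *ᵥ a, 0 ≤ x := fun x hx => by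
      obtain ⟨a, ha, rfl⟩ := Multiset.mem_map.mp hx
      exact (ht a ha).2
    refine mem_CPset_iff_multiset.mpr ⟨t, ht0, fun a ha => ⟨(ht a ha).1, ?_⟩, rfl⟩
    exact le_antisymm (hA0 ▸ Multiset.single_le_sum hnonneg _ (Multiset.mem_map_of_mem _ ha))
      (ht a ha).2
  · intro hA
    obtain ⟨s, hs0, hs, rfl⟩ := mem_CPset_iff_multiset.mp hA
    refine ⟨mem_CPset_iff_multiset.mpr ⟨s, hs0, fun a ha => (hs a ha).1, rfl⟩, ?_⟩
    rw [Set.mem_ofPred_eq, mip_multiset_sum_vecMulVec_self]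
    exact Multiset.sum_eq_zero fun x hx => by
      obtain ⟨a, ha, rfl⟩ := Multiset.mem_map.mp hx
      exact (hs a ha).2

end

lemma CPset_inter_coord_nonneg {n : ℕ} {S : Set (Fin n → ℝ)} (hS : ∀ a ∈ S, -a ∈ S)
    (i : Fin n) : CPset (S ∩ {a | 0 ≤ a i}) = CPset S := by
  refine Set.Subset.antisymm
    (fun A ⟨k, hk, f, hf, hA⟩ => ⟨k, hk, f, fun j => (hf j).1, hA⟩) ?_
  rintro A ⟨k, hk, f, hf, rfl⟩
  refine ⟨k, hk, fun j => if 0 ≤ f j i then f j else -f j, fun j => ?_, ?_⟩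
  · dsimp only
    split_ifs with h
    · exact ⟨hf j, h⟩
    · exact ⟨hS _ (hf j), by simp only [Set.mem_ofPred_eq, Pi.neg_apply]; linarith⟩
  · refine Finset.sum_congr rfl fun j _ => ?_
    dsimp only
    split_ifs <;> simp only [neg_vecMulVec, vecMulVec_neg, neg_neg]

lemma neg_mem_inter_of_dotProduct_mulVec {n : ℕ} (M : Matrix (Fin n) (Fin n) ℝ)
    (X : Submodule ℝ (Fin n → ℝ)) (P : ℝ → Prop) :
    ∀ a ∈ (X : Set (Fin n → ℝ)) ∩ {a | P (a ⬝ᵥ M *ᵥ a)},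
      -a ∈ (X : Set (Fin n → ℝ)) ∩ {a | P (a ⬝ᵥ M *ᵥ a)} := fun a ha =>
  ⟨X.neg_mem ha.1, by simpa only [Set.mem_ofPred_eq, mulVec_neg, neg_dotProduct, dotProduct_neg,
    neg_neg] using ha.2⟩

section

variable {m : ℕ} (a : Fin (m + 1) → ℝ)

lemma dotProduct_Jmat_mulVec : a ⬝ᵥ Jmat m *ᵥ a = a 0 ^ 2 - ∑ i : Fin m, a i.succ ^ 2 := by
  simp [Jmat, dotProduct, mulVec_diagonal, Fin.sum_univ_succ, sq, sub_eq_add_neg]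

lemma mem_soc_iff : a ∈ soc m ↔ 0 ≤ a ⬝ᵥ Jmat m *ᵥ a ∧ 0 ≤ a 0 := by
  rw [soc, Set.mem_ofPred_eq, Real.sqrt_le_iff, dotProduct_Jmat_mulVec, sub_nonneg, and_comm]

lemma mem_socBd_iff : a ∈ socBd m ↔ a ⬝ᵥ Jmat m *ᵥ a = 0 ∧ 0 ≤ a 0 := by
  rw [socBd, Set.mem_ofPred_eq, dotProduct_Jmat_mulVec, sub_eq_zero]
  constructor
  · intro h
    exact ⟨by rw [← h, Real.sq_sqrt (by positivity)], h ▸ Real.sqrt_nonneg _⟩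
  · rintro ⟨h, h0⟩
    rw [← h, Real.sqrt_sq h0]

end

theorem stmt10_general (m : ℕ) (X : Submodule ℝ (Fin (m+1) → ℝ)) :
    CPset (X : Set (Fin (m+1) → ℝ)) ∩
        {A : Matrix (Fin (m+1)) (Fin (m+1)) ℝ | 0 ≤ mip A (Jmat m)} =
      CPset ((X : Set (Fin (m+1) → ℝ)) ∩ soc m) ∧
    CPset (X : Set (Fin (m+1) → ℝ)) ∩
        {A : Matrix (Fin (m+1)) (Fin (m+1)) ℝ | mip A (Jmat m) = 0} =
      CPset ((X : Set (Fin (m+1) → ℝ)) ∩ socBd m) := by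
  have hsoc : (X : Set (Fin (m+1) → ℝ)) ∩ soc m =
      ((X : Set (Fin (m+1) → ℝ)) ∩ {a | 0 ≤ a ⬝ᵥ Jmat m *ᵥ a}) ∩ {a | 0 ≤ a 0} := by
    ext a
    simp only [Set.mem_inter_iff, mem_soc_iff, Set.mem_ofPred_eq, and_assoc]
  have hsocBd : (X : Set (Fin (m+1) → ℝ)) ∩ socBd m =
      ((X : Set (Fin (m+1) → ℝ)) ∩ {a | a ⬝ᵥ Jmat m *ᵥ a = 0}) ∩ {a | 0 ≤ a 0} := by
    ext a
    simp only [Set.mem_inter_iff, mem_socBd_iff, Set.mem_ofPred_eq, and_assoc]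
  rw [hsoc, hsocBd, CPset_inter_coord_nonneg (neg_mem_inter_of_dotProduct_mulVec _ X (0 ≤ ·)),
    CPset_inter_coord_nonneg (neg_mem_inter_of_dotProduct_mulVec _ X (· = 0))]
  exact ⟨CPset_inter_mip_nonneg _ X, CPset_inter_mip_eq_zero _ X⟩

/-- `S₊(X) ∩ {⟨A,Jₙ⟩ ≥ 0} = CP(X ∩ Lⁿ)` and
`S₊(X) ∩ {⟨A,Jₙ⟩ = 0} = CP(X ∩ ∂Lⁿ)` (here `n = m + 1 ≥ 2`). -/
theorem stmt10 (m : ℕ) (hm : 1 ≤ m) (X : Submodule ℝ (Fin (m+1) → ℝ)) :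
    CPset (X : Set (Fin (m+1) → ℝ)) ∩
        {A : Matrix (Fin (m+1)) (Fin (m+1)) ℝ | 0 ≤ mip A (Jmat m)} =
      CPset ((X : Set (Fin (m+1) → ℝ)) ∩ soc m) ∧
    CPset (X : Set (Fin (m+1) → ℝ)) ∩
        {A : Matrix (Fin (m+1)) (Fin (m+1)) ℝ | mip A (Jmat m) = 0} =
      CPset ((X : Set (Fin (m+1) → ℝ)) ∩ socBd m) :=
  stmt10_general m X
end
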